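/- Let H be a Hermitian 2^n × 2^n matrix indexed by {0,1}^n that is stoquastic, i.e. ⟨x|H|y⟩ is real and ≤ 0 for all x ≠ y, and m-local in the sense that ⟨x|H|y⟩ = 0 whenever d(x,y) > m. Suppose the smallest eigenvalue E₀ of H is simple with a normalized eigenvector ψ satisfying ψ(x) > 0 for all x, and that the second smallest eigenvalue of H is at least E₀ + γ for some γ > 0. Set π(x) = ψ(x)², N = ∑_{k=1}^m C(n,k), and sensitivity s = max over pairs x ≠ y with ⟨x|H|y⟩ ≠ 0 of |⟨x|H|y⟩|·ψ(x)/ψ(y). Let P be the level-m transition matrix: P(x,y) = (1/N)·π(y)/(π(x)+π(y)) if 1 ≤ d(x,y) ≤ m, P(x,x) = (1/N)·∑_{x' : 1 ≤ d(x,x') ≤ m} π(x)/(π(x)+π(x')), and P(x,y) = 0 otherwise. Then the second largest eigenvalue λ₁ of P satisfies 1 − λ₁ ≥ γ/(2Ns); equivalently, the relaxation time τ = 1/(1 − λ₁) is at most 2Ns/γ. -/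

import Mathlib

/-!
Let `v` be an eigenvector of `P` with eigenvalue `λ ≠ 1`. Since `P` is stochastic and
`π`-reversible, `v` is `π`-orthogonal to the constants, so `ψ v ⊥ ψ` and the gap of `H` gives
`γ ‖v‖²_π ≤ ⟨ψ v, (H - E₀) ψ v⟩`. Because `ψ` is a ground state, the right side is the Dirichlet
form of `v` with edge weights `-H(x,y) ψ(x) ψ(y)`, and by the definition of the sensitivity each
such weight is at most `s · min(π x, π y) ≤ 2 s π(x) π(y) / (π x + π y) = 2 N s π(x) P(x,y)`.
The Dirichlet form of `P` at `v` is `(1 - λ) ‖v‖²_π`, whence `γ ≤ 2 N s (1 - λ)`.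
For `λ = 1` the Dirichlet form of `P` vanishes, so `v` is constant along Hamming edges.
-/

open Matrix Finset

theorem le_one_sub_div_of_le_mul {γ c lam : ℝ} (hγ : 0 < γ) (hc : 0 ≤ c)
    (h : γ ≤ c * (1 - lam)) : lam ≤ 1 - γ / c := by
  have hc' : 0 < c := hc.lt_of_ne <| by rintro rfl; linarith
  rw [le_sub_comm, div_le_iff₀' hc']
  exact h

theorem le_two_mul_mul_div_add {c s u w : ℝ} (hu : 0 < u) (hw : 0 < w) (hcu : c ≤ s * u)
    (hcw : c ≤ s * w) : c ≤ 2 * s * (u * w) / (u + w) := by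
  rw [le_div_iff₀ (add_pos hu hw)]
  linarith [mul_le_mul_of_nonneg_right hcw hu.le, mul_le_mul_of_nonneg_right hcu hw.le]

section Hamming

variable {ι : Type*} [Fintype ι] [DecidableEq ι]

def hammingDiffEquiv (x : ι → Bool) : (ι → Bool) ≃ Finset ι where
  toFun y := {i | x i ≠ y i}
  invFun S i := xor (x i) (decide (i ∈ S))
  left_inv y := by
    funext i
    cases hx : x i <;> cases hy : y i <;> simp [hx, hy]
  right_inv S := by
    ext i
    cases x i <;> by_cases hi : i ∈ S <;> simp [hi]

theorem card_filter_hammingDist_eq (x : ι → Bool) (k : ℕ) :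
    #{y | hammingDist x y = k} = (Fintype.card ι).choose k := by
  rw [← Fintype.card_finset_len, ← Fintype.card_subtype]
  exact Fintype.card_congr ((hammingDiffEquiv x).subtypeEquiv fun _ => Iff.rfl)

theorem card_filter_hammingDist_mem_Icc (x : ι → Bool) (a b : ℕ) :
    #{y | a ≤ hammingDist x y ∧ hammingDist x y ≤ b} =
      ∑ k ∈ Icc a b, (Fintype.card ι).choose k := by
  rw [card_eq_sum_card_fiberwise (f := hammingDist x) (t := Icc a b)
    fun y hy => by simpa using hy]
  refine sum_congr rfl fun k hk => ?_
  rw [filter_filter, ← card_filter_hammingDist_eq x k]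
  congr 1
  refine filter_congr fun y _ => ?_
  constructor
  · exact And.right
  · rintro rfl; exact ⟨mem_Icc.mp hk, rfl⟩

theorem sum_choose_Icc_pos {n m : ℕ} (hm : 1 ≤ m) (hmn : m ≤ n) :
    0 < ∑ k ∈ Icc 1 m, (n.choose k : ℝ) :=
  lt_of_lt_of_le (by rw [Nat.choose_one_right]; exact_mod_cast hm.trans hmn)
    (single_le_sum (fun k _ => by positivity) (mem_Icc.mpr ⟨le_rfl, hm⟩))

end Hamming

section HammingStep

variable {ι : Type*} [Fintype ι] [DecidableEq ι] {β : ι → Type*} [∀ i, DecidableEq (β i)]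

theorem exists_hammingDist_eq_one_lt {x y : ∀ i, β i} (h : x ≠ y) :
    ∃ z, hammingDist x z = 1 ∧ hammingDist z y < hammingDist x y := by
  obtain ⟨i, hi⟩ := Function.ne_iff.mp h
  refine ⟨Function.update x i (y i), ?_, ?_⟩
  · rw [hammingDist, card_eq_one]
    refine ⟨i, ?_⟩
    ext j
    by_cases hj : j = i
    · subst hj; simp [hi]
    · simp [hj]
  · refine card_lt_card ⟨fun j hj => ?_, fun hsub => ?_⟩
    · by_cases hji : j = i
      · subst hji; simpa using hi
      · simpa [Function.update_of_ne hji] using hj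
    · simpa [hi] using hsub (mem_filter.mpr ⟨mem_univ i, hi⟩)

theorem apply_eq_of_forall_hammingDist_eq_one {α : Sort*} {f : (∀ i, β i) → α}
    (hf : ∀ x y, hammingDist x y = 1 → f x = f y) (x y : ∀ i, β i) : f x = f y := by
  induction hd : hammingDist x y using Nat.strong_induction_on generalizing x with
  | _ k ih =>
    by_cases hxy : x = y
    · rw [hxy]
    obtain ⟨z, hxz, hzy⟩ := exists_hammingDist_eq_one_lt hxy
    rw [hf x z hxz, ih _ (hd ▸ hzy) z rfl]

end HammingStep

section Dirichlet

variable {ι : Type*} [Fintype ι]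

noncomputable def dirichletForm (w : ι → ι → ℝ) (f : ι → ℝ) : ℝ :=
  (1 / 2) * ∑ x, ∑ y, w x y * (f x - f y) ^ 2

theorem dirichletForm_eq_of_symm {w : ι → ι → ℝ} (hw : ∀ x y, w x y = w y x) (f : ι → ℝ) :
    dirichletForm w f = ∑ x, (∑ y, w x y) * f x ^ 2 - ∑ x, ∑ y, w x y * (f x * f y) := by
  have hswap : ∑ x, ∑ y, w x y * f y ^ 2 = ∑ x, (∑ y, w x y) * f x ^ 2 := by
    rw [sum_comm]
    simp only [sum_mul, hw]
  have hexp : ∑ x, ∑ y, w x y * (f x - f y) ^ 2 =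
      ∑ x, (∑ y, w x y) * f x ^ 2 + ∑ x, ∑ y, w x y * f y ^ 2
        - 2 * ∑ x, ∑ y, w x y * (f x * f y) := by
    simp only [sum_mul, mul_sum, ← sum_add_distrib, ← sum_sub_distrib]
    exact sum_congr rfl fun x _ => sum_congr rfl fun y _ => by ring
  rw [dirichletForm, hexp, hswap]
  ring

theorem dirichletForm_le_mul {w w' : ι → ι → ℝ} {C : ℝ}
    (h : ∀ x y, x ≠ y → w x y ≤ C * w' x y) (f : ι → ℝ) :
    dirichletForm w f ≤ C * dirichletForm w' f := by
  rw [dirichletForm, dirichletForm, mul_left_comm]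
  refine mul_le_mul_of_nonneg_left ?_ (by norm_num)
  rw [mul_sum]
  refine sum_le_sum fun x _ => ?_
  rw [mul_sum]
  refine sum_le_sum fun y _ => ?_
  by_cases hxy : x = y
  · simp [hxy]
  · rw [← mul_assoc]
    exact mul_le_mul_of_nonneg_right (h x y hxy) (sq_nonneg _)

theorem apply_eq_of_dirichletForm_eq_zero {w : ι → ι → ℝ} {f : ι → ℝ}
    (hw : ∀ x y, 0 ≤ w x y) (hf : dirichletForm w f = 0) {x y : ι} (hxy : 0 < w x y) :
    f x = f y := by
  have hnonneg : ∀ x y, 0 ≤ w x y * (f x - f y) ^ 2 :=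
    fun x y => mul_nonneg (hw x y) (sq_nonneg _)
  have hsum : ∑ x, ∑ y, w x y * (f x - f y) ^ 2 = 0 := by
    simpa [dirichletForm] using hf
  have hxy0 : w x y * (f x - f y) ^ 2 = 0 :=
    (sum_eq_zero_iff_of_nonneg fun y _ => hnonneg x y).mp
      ((sum_eq_zero_iff_of_nonneg fun x _ => sum_nonneg fun y _ => hnonneg x y).mp hsum x
        (mem_univ x)) y (mem_univ y)
  rw [mul_eq_zero, or_iff_right hxy.ne', sq_eq_zero_iff, sub_eq_zero] at hxy0
  exact hxy0

end Dirichlet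

section ReversibleChain

variable {ι : Type*} [Fintype ι] {π : ι → ℝ} {P : Matrix ι ι ℝ}

theorem sum_mul_mulVec_of_reversible (hrow : ∀ x, ∑ y, P x y = 1)
    (hrev : ∀ x y, π x * P x y = π y * P y x) (f : ι → ℝ) :
    ∑ x, π x * (P *ᵥ f) x = ∑ x, π x * f x := by
  calc ∑ x, π x * (P *ᵥ f) x = ∑ x, ∑ y, π y * P y x * f y := by
        simp only [mulVec, dotProduct, mul_sum, ← mul_assoc, hrev]
    _ = ∑ y, π y * f y * ∑ x, P y x := by
        rw [sum_comm]
        exact sum_congr rfl fun y _ => by rw [mul_sum]; exact sum_congr rfl fun x _ => by ring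
    _ = ∑ x, π x * f x := by simp only [hrow, mul_one]

theorem sum_mul_eq_zero_of_mulVec_eq_smul (hrow : ∀ x, ∑ y, P x y = 1)
    (hrev : ∀ x y, π x * P x y = π y * P y x) {v : ι → ℝ} {lam : ℝ} (hv : P *ᵥ v = lam • v)
    (hlam : lam ≠ 1) : ∑ x, π x * v x = 0 := by
  have h := sum_mul_mulVec_of_reversible hrow hrev v
  simp only [hv, Pi.smul_apply, smul_eq_mul, mul_left_comm _ lam, ← mul_sum] at h
  exact (mul_left_eq_self₀.mp h).resolve_left hlam

theorem dirichletForm_eq_of_mulVec_eq_smul (hrow : ∀ x, ∑ y, P x y = 1)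
    (hrev : ∀ x y, π x * P x y = π y * P y x) {v : ι → ℝ} {lam : ℝ} (hv : P *ᵥ v = lam • v) :
    dirichletForm (fun x y => π x * P x y) v = (1 - lam) * ∑ x, π x * v x ^ 2 := by
  have hrowπ : ∀ x, ∑ y, π x * P x y = π x := fun x => by rw [← mul_sum, hrow, mul_one]
  have hcross : ∑ x, ∑ y, π x * P x y * (v x * v y) = lam * ∑ x, π x * v x ^ 2 := by
    rw [mul_sum]
    refine sum_congr rfl fun x _ => ?_
    calc ∑ y, π x * P x y * (v x * v y) = π x * v x * (P *ᵥ v) x := by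
          rw [mulVec, dotProduct, mul_sum]
          exact sum_congr rfl fun y _ => by ring
      _ = lam * (π x * v x ^ 2) := by rw [hv, Pi.smul_apply, smul_eq_mul]; ring
  rw [dirichletForm_eq_of_symm hrev, hcross]
  simp only [hrowπ]
  ring

end ReversibleChain

section GroundState

variable {ι : Type*} [Fintype ι] {Q : Matrix ι ι ℝ} {ψ : ι → ℝ} {E₀ : ℝ}

theorem dotProduct_mulVec_mul_eq (hQ : Q.IsSymm) (hground : Q *ᵥ ψ = E₀ • ψ) (f : ι → ℝ) :
    (ψ * f) ⬝ᵥ (Q *ᵥ (ψ * f)) =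
      E₀ * ∑ x, ψ x ^ 2 * f x ^ 2 + dirichletForm (fun x y => -Q x y * (ψ x * ψ y)) f := by
  have hrow : ∀ x, ∑ y, -Q x y * (ψ x * ψ y) = -(E₀ * ψ x ^ 2) := fun x => by
    have hQψ : ∑ y, Q x y * ψ y = E₀ * ψ x := congrFun hground x
    calc ∑ y, -Q x y * (ψ x * ψ y) = -(ψ x * ∑ y, Q x y * ψ y) := by
          rw [mul_sum, ← sum_neg_distrib]
          exact sum_congr rfl fun y _ => by ring
      _ = -(E₀ * ψ x ^ 2) := by rw [hQψ]; ring
  have hcross : ∑ x, ∑ y, -Q x y * (ψ x * ψ y) * (f x * f y) =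
      -((ψ * f) ⬝ᵥ (Q *ᵥ (ψ * f))) := by
    simp only [dotProduct, mulVec, Pi.mul_apply, mul_sum, ← sum_neg_distrib]
    exact sum_congr rfl fun x _ => sum_congr rfl fun y _ => by ring
  have hsymm : ∀ x y, -Q x y * (ψ x * ψ y) = -Q y x * (ψ y * ψ x) := fun x y => by
    rw [hQ.apply x y, mul_comm (ψ x)]
  rw [dirichletForm_eq_of_symm hsymm, hcross]
  simp only [hrow]
  simp only [neg_mul, sum_neg_distrib, mul_sum, mul_assoc]
  ring

theorem gap_mul_le_dirichletForm (hQ : Q.IsSymm) (hground : Q *ᵥ ψ = E₀ • ψ) {γ : ℝ}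
    (hgap : ∀ g, ψ ⬝ᵥ g = 0 → (E₀ + γ) * ∑ x, g x ^ 2 ≤ g ⬝ᵥ (Q *ᵥ g))
    {f : ι → ℝ} (hf : ∑ x, ψ x ^ 2 * f x = 0) :
    γ * ∑ x, ψ x ^ 2 * f x ^ 2 ≤ dirichletForm (fun x y => -Q x y * (ψ x * ψ y)) f := by
  have horth : ψ ⬝ᵥ (ψ * f) = 0 := by
    simpa only [dotProduct, Pi.mul_apply, ← mul_assoc, ← sq] using hf
  have h := hgap _ horth
  simp only [Pi.mul_apply, mul_pow] at h
  rw [dotProduct_mulVec_mul_eq hQ hground] at h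
  linarith

theorem gap_le_mul_one_sub_of_comparison (hQ : Q.IsSymm) (hground : Q *ᵥ ψ = E₀ • ψ) {γ : ℝ}
    (hgap : ∀ g, ψ ⬝ᵥ g = 0 → (E₀ + γ) * ∑ x, g x ^ 2 ≤ g ⬝ᵥ (Q *ᵥ g))
    {P : Matrix ι ι ℝ} (hrow : ∀ x, ∑ y, P x y = 1)
    (hrev : ∀ x y, ψ x ^ 2 * P x y = ψ y ^ 2 * P y x) {C : ℝ}
    (hcomp : ∀ x y, x ≠ y → -Q x y * (ψ x * ψ y) ≤ C * (ψ x ^ 2 * P x y))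
    (hψ : ∀ x, ψ x ≠ 0) {v : ι → ℝ} {lam : ℝ} (hv0 : v ≠ 0) (hv : P *ᵥ v = lam • v)
    (hlam : lam ≠ 1) : γ ≤ C * (1 - lam) := by
  have hT : 0 < ∑ x, ψ x ^ 2 * v x ^ 2 := by
    obtain ⟨x, hx⟩ := Function.ne_iff.mp hv0
    exact sum_pos' (fun x _ => by positivity)
      ⟨x, mem_univ x, mul_pos (sq_pos_of_ne_zero (hψ x)) (sq_pos_of_ne_zero hx)⟩
  refine le_of_mul_le_mul_right ?_ hT
  calc γ * ∑ x, ψ x ^ 2 * v x ^ 2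
      ≤ dirichletForm (fun x y => -Q x y * (ψ x * ψ y)) v :=
        gap_mul_le_dirichletForm hQ hground hgap
          (sum_mul_eq_zero_of_mulVec_eq_smul hrow hrev hv hlam)
    _ ≤ C * dirichletForm (fun x y => ψ x ^ 2 * P x y) v := dirichletForm_le_mul hcomp v
    _ = C * (1 - lam) * ∑ x, ψ x ^ 2 * v x ^ 2 := by
        rw [dirichletForm_eq_of_mulVec_eq_smul hrow hrev hv, mul_assoc]

end GroundState

theorem Matrix.IsHermitian.isSymm_map_re {ι : Type*} {H : Matrix ι ι ℂ} (hH : H.IsHermitian) :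
    (H.map Complex.re).IsSymm :=
  IsSymm.ext fun i j => by simp [← hH.apply i j]

section RealPart

variable {ι : Type*} [Fintype ι]

theorem re_mulVec_ofReal (H : Matrix ι ι ℂ) (g : ι → ℝ) (x : ι) :
    ((H *ᵥ fun y => (g y : ℂ)) x).re = (H.map Complex.re *ᵥ g) x := by
  simp [mulVec, dotProduct, Complex.re_sum]

theorem re_star_dotProduct_mulVec_ofReal (H : Matrix ι ι ℂ) (g : ι → ℝ) :
    (star (fun x => (g x : ℂ)) ⬝ᵥ (H *ᵥ fun x => (g x : ℂ))).re =
      g ⬝ᵥ (H.map Complex.re *ᵥ g) := by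
  simp [dotProduct, Complex.re_sum, ← re_mulVec_ofReal]

theorem star_ofReal_dotProduct_ofReal (ψ g : ι → ℝ) :
    star (fun x => (ψ x : ℂ)) ⬝ᵥ (fun x => (g x : ℂ)) = ((ψ ⬝ᵥ g : ℝ) : ℂ) := by
  simp [dotProduct]

theorem map_re_mulVec_eq_smul {H : Matrix ι ι ℂ} {ψ : ι → ℝ} {E : ℝ}
    (h : H *ᵥ (fun x => (ψ x : ℂ)) = (E : ℂ) • fun x => (ψ x : ℂ)) :
    H.map Complex.re *ᵥ ψ = E • ψ :=
  funext fun x => by simpa [re_mulVec_ofReal] using congrArg Complex.re (congrFun h x)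

theorem mul_sum_sq_le_dotProduct_map_re_mulVec {H : Matrix ι ι ℂ} {ψ : ι → ℝ} {c : ℝ}
    (h : ∀ v : ι → ℂ, star (fun x => (ψ x : ℂ)) ⬝ᵥ v = 0 →
      c * ∑ x, ‖v x‖ ^ 2 ≤ (star v ⬝ᵥ (H *ᵥ v)).re)
    {g : ι → ℝ} (hg : ψ ⬝ᵥ g = 0) :
    c * ∑ x, g x ^ 2 ≤ g ⬝ᵥ (H.map Complex.re *ᵥ g) := by
  simpa [re_star_dotProduct_mulVec_ofReal] using
    h (fun x => (g x : ℂ)) (by rw [star_ofReal_dotProduct_ofReal, hg, Complex.ofReal_zero])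

end RealPart

section Sensitivity

variable {ι : Type*} (H : Matrix ι ι ℂ) (ψ : ι → ℝ)

noncomputable def sensitivity : ℝ :=
  sSup {r : ℝ | ∃ x y : ι, x ≠ y ∧ H x y ≠ 0 ∧ r = ‖H x y‖ * ψ x / ψ y}

variable {H ψ}

theorem sensitivity_nonneg (hψ : ∀ x, 0 < ψ x) : 0 ≤ sensitivity H ψ :=
  Real.sSup_nonneg fun _ ⟨x, y, _, _, hr⟩ => hr ▸ by have := hψ x; have := hψ y; positivity

theorem norm_mul_div_le_sensitivity [Finite ι] (hψ : ∀ x, 0 < ψ x) {x y : ι} (hxy : x ≠ y) :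
    ‖H x y‖ * ψ x / ψ y ≤ sensitivity H ψ := by
  by_cases hH : H x y = 0
  · simpa [hH] using sensitivity_nonneg hψ
  refine le_csSup ?_ ⟨x, y, hxy, hH, rfl⟩
  refine (Set.finite_range fun p : ι × ι => ‖H p.1 p.2‖ * ψ p.1 / ψ p.2).bddAbove.mono ?_
  rintro _ ⟨x, y, -, -, rfl⟩
  exact ⟨(x, y), rfl⟩

end Sensitivity

theorem neg_re_mul_le_sensitivity {ι : Type*} [Finite ι] {H : Matrix ι ι ℂ} (hH : H.IsHermitian)
    {ψ : ι → ℝ} (hψ : ∀ x, 0 < ψ x) {x y : ι} (hxy : x ≠ y) :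
    -(H x y).re * (ψ x * ψ y) ≤
      2 * sensitivity H ψ * (ψ x ^ 2 * ψ y ^ 2) / (ψ x ^ 2 + ψ y ^ 2) := by
  have hx := hψ x
  have hy := hψ y
  have hyx : ‖H x y‖ * ψ y / ψ x ≤ sensitivity H ψ := by
    simpa [← hH.apply x y] using norm_mul_div_le_sensitivity hψ hxy.symm
  have hxy' := norm_mul_div_le_sensitivity (H := H) hψ hxy
  rw [div_le_iff₀ hx] at hyx
  rw [div_le_iff₀ hy] at hxy'
  calc -(H x y).re * (ψ x * ψ y) ≤ ‖H x y‖ * (ψ x * ψ y) := by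
        gcongr
        exact (neg_le_abs _).trans (Complex.abs_re_le_norm _)
    _ ≤ _ := le_two_mul_mul_div_add (by positivity) (by positivity)
        (by nlinarith) (by nlinarith)

section LevelWalk

variable {ι : Type*} [Fintype ι] [DecidableEq ι]

structure IsLevelWalk (m : ℕ) (π : (ι → Bool) → ℝ) (N : ℝ) (P : Matrix (ι → Bool) (ι → Bool) ℝ) :
    Prop where
  apply_of_le : ∀ x y, 1 ≤ hammingDist x y → hammingDist x y ≤ m →
    P x y = 1 / N * (π y / (π x + π y))
  apply_self : ∀ x, P x x = 1 / N *
    ∑ x' ∈ Finset.univ.filter (fun x' => 1 ≤ hammingDist x x' ∧ hammingDist x x' ≤ m),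
      π x / (π x + π x')
  apply_of_lt : ∀ x y, m < hammingDist x y → P x y = 0

namespace IsLevelWalk

variable {m : ℕ} {π : (ι → Bool) → ℝ} {N : ℝ} {P : Matrix (ι → Bool) (ι → Bool) ℝ}

theorem mul_apply_of_le (hP : IsLevelWalk m π N P) {x y : ι → Bool} (h1 : 1 ≤ hammingDist x y)
    (hm : hammingDist x y ≤ m) : π x * P x y = π x * π y / (π x + π y) / N := by
  rw [hP.apply_of_le x y h1 hm]
  ring

theorem mul_apply_comm (hP : IsLevelWalk m π N P) (x y : ι → Bool) :
    π x * P x y = π y * P y x := by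
  rcases eq_or_ne x y with rfl | hxy
  · rfl
  have h1 : 1 ≤ hammingDist x y := hammingDist_pos.mpr hxy
  rcases le_or_gt (hammingDist x y) m with hm | hm
  · rw [hP.mul_apply_of_le h1 hm, hP.mul_apply_of_le (hammingDist_comm x y ▸ h1)
      (hammingDist_comm x y ▸ hm)]
    ring
  · rw [hP.apply_of_lt x y hm, hP.apply_of_lt y x (hammingDist_comm x y ▸ hm), mul_zero,
      mul_zero]

theorem nonneg (hP : IsLevelWalk m π N P) (hπ : ∀ x, 0 < π x) (hN : 0 < N) (x y : ι → Bool) :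
    0 ≤ P x y := by
  have hπxy : ∀ y, 0 < π x + π y := fun y => add_pos (hπ x) (hπ y)
  rcases eq_or_ne x y with rfl | hxy
  · rw [hP.apply_self]
    exact mul_nonneg (by positivity) (sum_nonneg fun y _ => (div_pos (hπ x) (hπxy y)).le)
  rcases le_or_gt (hammingDist x y) m with hm | hm
  · rw [hP.apply_of_le x y (hammingDist_pos.mpr hxy) hm]
    have := hπ y
    have := hπxy y
    positivity
  · exact (hP.apply_of_lt x y hm).ge

theorem pos (hP : IsLevelWalk m π N P) (hπ : ∀ x, 0 < π x) (hN : 0 < N) {x y : ι → Bool}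
    (h1 : 1 ≤ hammingDist x y) (hm : hammingDist x y ≤ m) : 0 < P x y := by
  rw [hP.apply_of_le x y h1 hm]
  have := hπ x
  have := hπ y
  positivity

theorem apply_eq_of_mulVec_eq_self (hP : IsLevelWalk m π N P) (hπ : ∀ x, 0 < π x) (hN : 0 < N)
    (hm : 1 ≤ m) (hrow : ∀ x, ∑ y, P x y = 1) {v : (ι → Bool) → ℝ} (hv : P *ᵥ v = v)
    (x y : ι → Bool) : v x = v y := by
  have h0 := dirichletForm_eq_of_mulVec_eq_smul hrow hP.mul_apply_comm (lam := 1)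
    (by rwa [one_smul])
  rw [sub_self, zero_mul] at h0
  refine apply_eq_of_forall_hammingDist_eq_one (fun x y hxy => ?_) x y
  exact apply_eq_of_dirichletForm_eq_zero (fun x y => mul_nonneg (hπ x).le (hP.nonneg hπ hN x y))
    h0 (mul_pos (hπ x) (hP.pos hπ hN hxy.ge (hxy ▸ hm)))

theorem sum_apply (hP : IsLevelWalk m π N P) (hπ : ∀ x, 0 < π x)
    (hN : N = ∑ k ∈ Icc 1 m, ((Fintype.card ι).choose k : ℝ)) (hN0 : N ≠ 0) (x : ι → Bool) :
    ∑ y, P x y = 1 := by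
  set ball := Finset.univ.filter (fun y => 1 ≤ hammingDist x y ∧ hammingDist x y ≤ m)
  have houtside : ∑ y ∈ univ.filter (· ∉ ball), P x y = P x x := by
    refine sum_eq_single_of_mem x (by simp [ball]) fun y hy hyx => hP.apply_of_lt x y ?_
    have := hammingDist_pos.mpr (Ne.symm hyx)
    simp only [mem_filter, mem_univ, true_and, ball, not_and, not_le] at hy
    exact hy this
  have hinside : ∑ y ∈ ball, P x y = 1 / N * ∑ y ∈ ball, π y / (π x + π y) := by
    rw [mul_sum]
    exact sum_congr rfl fun y hy => (mem_filter.mp hy).2 |> fun h => hP.apply_of_le x y h.1 h.2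
  have hpair : ∀ y, π y / (π x + π y) + π x / (π x + π y) = 1 := fun y => by
    rw [← add_div, add_comm, div_self (add_pos (hπ x) (hπ y)).ne']
  have hcard : (#ball : ℝ) = N := by
    rw [hN, card_filter_hammingDist_mem_Icc]
    push_cast
    rfl
  rw [← sum_filter_add_sum_filter_not univ (· ∈ ball), filter_mem_eq_inter, univ_inter,
    houtside, hinside, hP.apply_self, ← mul_add, ← sum_add_distrib]
  simp only [hpair, sum_const, nsmul_eq_mul, mul_one, hcard]
  exact one_div_mul_cancel hN0

theorem neg_re_mul_le {ψ : (ι → Bool) → ℝ} (hψ : ∀ x, 0 < ψ x)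
    (hP : IsLevelWalk m (fun x => ψ x ^ 2) N P) (hN : N ≠ 0) {H : Matrix (ι → Bool) (ι → Bool) ℂ}
    (hH : H.IsHermitian) (hlocal : ∀ x y, m < hammingDist x y → H x y = 0) {x y : ι → Bool}
    (hxy : x ≠ y) :
    -(H x y).re * (ψ x * ψ y) ≤ 2 * N * sensitivity H ψ * (ψ x ^ 2 * P x y) := by
  rcases le_or_gt (hammingDist x y) m with hm | hm
  · rw [hP.mul_apply_of_le (hammingDist_pos.mpr hxy) hm]
    convert neg_re_mul_le_sensitivity hH hψ hxy using 1
    field_simp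
  · simp [hlocal x y hm, hP.apply_of_lt x y hm]

end IsLevelWalk

end LevelWalk

theorem stmt_14_general (n m : ℕ) (hm1 : 1 ≤ m) (hmn : m ≤ n)
    (H : Matrix (Fin n → Bool) (Fin n → Bool) ℂ)
    (hHherm : H.IsHermitian)
    (hlocal : ∀ x y, m < hammingDist x y → H x y = 0)
    (E₀ : ℝ) (γ : ℝ) (hγ : 0 < γ)
    (ψ : (Fin n → Bool) → ℝ) (hψpos : ∀ x, 0 < ψ x)
    (hground : H *ᵥ (fun x => (ψ x : ℂ)) = (E₀ : ℂ) • (fun x => (ψ x : ℂ)))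
    (hgap : ∀ v : (Fin n → Bool) → ℂ,
      star (fun x => (ψ x : ℂ)) ⬝ᵥ v = 0 →
      (E₀ + γ) * ∑ x, ‖v x‖ ^ 2 ≤ (star v ⬝ᵥ (H *ᵥ v)).re)
    (π : (Fin n → Bool) → ℝ) (hπ : ∀ x, π x = ψ x ^ 2)
    (N : ℝ) (hN : N = ∑ k ∈ Finset.Icc 1 m, (Nat.choose n k : ℝ))
    (s : ℝ) (hs : s = sSup {r : ℝ | ∃ x y : Fin n → Bool, x ≠ y ∧ H x y ≠ 0 ∧
      r = ‖H x y‖ * ψ x / ψ y})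
    (P : Matrix (Fin n → Bool) (Fin n → Bool) ℝ)
    (hPoff : ∀ x y, 1 ≤ hammingDist x y → hammingDist x y ≤ m →
      P x y = 1 / N * (π y / (π x + π y)))
    (hPdiag : ∀ x, P x x = 1 / N *
      ∑ x' ∈ Finset.univ.filter
        (fun x' => 1 ≤ hammingDist x x' ∧ hammingDist x x' ≤ m),
          π x / (π x + π x'))
    (hPfar : ∀ x y, m < hammingDist x y → P x y = 0) :
    (∀ v : (Fin n → Bool) → ℝ, P *ᵥ v = v → ∃ c : ℝ, v = fun _ => c) ∧
    (∀ lam : ℝ, (∃ v : (Fin n → Bool) → ℝ, v ≠ 0 ∧ P *ᵥ v = lam • v) →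
      lam = 1 ∨ lam ≤ 1 - γ / (2 * N * s)) := by
  obtain rfl : π = fun x => ψ x ^ 2 := funext hπ
  obtain rfl : s = sensitivity H ψ := hs
  have hπpos : ∀ x, 0 < ψ x ^ 2 := fun x => pow_pos (hψpos x) 2
  have hNpos : 0 < N := hN ▸ sum_choose_Icc_pos hm1 hmn
  have hP : IsLevelWalk m (fun x => ψ x ^ 2) N P := ⟨hPoff, hPdiag, hPfar⟩
  have hrow := hP.sum_apply hπpos (by simpa using hN) hNpos.ne'
  refine ⟨fun v hv => ⟨v 0, funext fun x =>
    hP.apply_eq_of_mulVec_eq_self hπpos hNpos hm1 hrow hv x 0⟩, fun lam ⟨v, hv0, hv⟩ => or_iff_not_imp_left.mpr fun hlam => ?_⟩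
  refine le_one_sub_div_of_le_mul hγ
    (by have := sensitivity_nonneg (H := H) hψpos; positivity) ?_
  exact gap_le_mul_one_sub_of_comparison hHherm.isSymm_map_re (map_re_mulVec_eq_smul hground)
    (fun g => mul_sum_sq_le_dotProduct_map_re_mulVec hgap) hrow hP.mul_apply_comm
    (fun x y hxy => hP.neg_re_mul_le hψpos hNpos.ne' hHherm hlocal hxy) (fun x => (hψpos x).ne')
    hv0 hv hlam

/-- For the unique ground state `ψ > 0` of a gapped `m`-local stoquastic
Hamiltonian `H` with spectral gap `γ` and sensitivity `s`, the level-`m` walk `P` built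
from `π = ψ²` has spectral gap at least `γ/(2Ns)`: every eigenvalue of `P` other than `1`
is at most `1 - γ/(2Ns)`, and the eigenvalue-`1` eigenspace consists of the constant
vectors. Equivalently, the relaxation time `τ = 1/(1-λ₁)` is at most `2Ns/γ`. -/
theorem stmt_14 (n m : ℕ) (hm1 : 1 ≤ m) (hmn : m ≤ n)
    (H : Matrix (Fin n → Bool) (Fin n → Bool) ℂ)
    (hHherm : H.IsHermitian)
    (hstoq : ∀ x y, x ≠ y → (H x y).im = 0 ∧ (H x y).re ≤ 0)
    (hlocal : ∀ x y, m < hammingDist x y → H x y = 0)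
    (E₀ : ℝ) (γ : ℝ) (hγ : 0 < γ)
    (ψ : (Fin n → Bool) → ℝ) (hψpos : ∀ x, 0 < ψ x) (hψnorm : ∑ x, ψ x ^ 2 = 1)
    (hground : H *ᵥ (fun x => (ψ x : ℂ)) = (E₀ : ℂ) • (fun x => (ψ x : ℂ)))
    (hE₀min : ∀ v : (Fin n → Bool) → ℂ,
      E₀ * ∑ x, ‖v x‖ ^ 2 ≤ (star v ⬝ᵥ (H *ᵥ v)).re)
    (hgap : ∀ v : (Fin n → Bool) → ℂ,
      star (fun x => (ψ x : ℂ)) ⬝ᵥ v = 0 →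
      (E₀ + γ) * ∑ x, ‖v x‖ ^ 2 ≤ (star v ⬝ᵥ (H *ᵥ v)).re)
    (π : (Fin n → Bool) → ℝ) (hπ : ∀ x, π x = ψ x ^ 2)
    (N : ℝ) (hN : N = ∑ k ∈ Finset.Icc 1 m, (Nat.choose n k : ℝ))
    (s : ℝ) (hs : s = sSup {r : ℝ | ∃ x y : Fin n → Bool, x ≠ y ∧ H x y ≠ 0 ∧
      r = ‖H x y‖ * ψ x / ψ y})
    (P : Matrix (Fin n → Bool) (Fin n → Bool) ℝ)
    (hPoff : ∀ x y, 1 ≤ hammingDist x y → hammingDist x y ≤ m →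
      P x y = 1 / N * (π y / (π x + π y)))
    (hPdiag : ∀ x, P x x = 1 / N *
      ∑ x' ∈ Finset.univ.filter
        (fun x' => 1 ≤ hammingDist x x' ∧ hammingDist x x' ≤ m),
          π x / (π x + π x'))
    (hPfar : ∀ x y, m < hammingDist x y → P x y = 0) :
    (∀ v : (Fin n → Bool) → ℝ, P *ᵥ v = v → ∃ c : ℝ, v = fun _ => c) ∧
    (∀ lam : ℝ, (∃ v : (Fin n → Bool) → ℝ, v ≠ 0 ∧ P *ᵥ v = lam • v) →
      lam = 1 ∨ lam ≤ 1 - γ / (2 * N * s)) :=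
  stmt_14_general n m hm1 hmn H hHherm hlocal E₀ γ hγ ψ hψpos hground hgap π hπ N hN s hs P hPoff
    hPdiag hPfar
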